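/- Characterization for symmetric invariance: For n ≥ 2, 2 ≤ u ≤ n and k ≥ 1, there exists an S_n-invariant distinct DNF tautology on n variables with all cube lengths between k and u if and only if k ≤ min(u − 1, n/2) (floor division). -/

import Mathlib

/-!
In an `S_n`-invariant distinct DNF every cube is monochromatic, since a transposition of two
variables of its support fixes the support; and a positive and a negative cube never have the
same length, since a permutation carrying one support onto the other must preserve signs.
Covering the assignment with one true value fewer than the shortest positive cube therefore
needs a negative cube of a different length, and the two lengths sum to at most `n + 1`; this
gives `k < u` and `2k ≤ n`. Conversely, when `2k ≤ n` the positive `k`-cubes together with the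
negative `(k+1)`-cubes form such a tautology.
-/

abbrev Cube (n : ℕ) := Finset (Fin n) × (Fin n → Bool)

def Sat {n : ℕ} (a : Fin n → Bool) (c : Cube n) : Prop :=
  ∀ i ∈ c.1, a i = c.2 i

def DistinctDNF {n : ℕ} (D : Finset (Cube n)) : Prop :=
  ∀ c ∈ D, ∀ c' ∈ D, c.1 = c'.1 → c = c'

def Tauto {n : ℕ} (D : Finset (Cube n)) : Prop :=
  ∀ a : Fin n → Bool, ∃ c ∈ D, Sat a c

def MemUpTo {n : ℕ} (D : Finset (Cube n)) (c : Cube n) : Prop :=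
  ∃ c' ∈ D, c'.1 = c.1 ∧ ∀ i ∈ c.1, c'.2 i = c.2 i

def permCube {n : ℕ} (σ : Equiv.Perm (Fin n)) (c : Cube n) : Cube n :=
  (c.1.image σ, c.2 ∘ σ.symm)

theorem Finset.exists_perm_image_eq {α : Type*} [DecidableEq α] {s t : Finset α}
    (h : s.card = t.card) : ∃ σ : Equiv.Perm α, s.image σ = t := by
  obtain ⟨σ, hσ⟩ := (Set.powersetCard.isPretransitive (α := α) (n := t.card)).exists_smul_eq
    ⟨s, h⟩ ⟨t, rfl⟩
  exact ⟨σ, by simpa [Subtype.ext_iff, Finset.smul_finset_def] using hσ⟩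

theorem Finset.image_swap_of_mem {α : Type*} [DecidableEq α] {s : Finset α} {i j : α}
    (hi : i ∈ s) (hj : j ∈ s) : s.image (Equiv.swap i j) = s := by
  simpa [Finset.map_eq_image] using Finset.map_perm (s := s) (σ := Equiv.swap i j) fun x hx => by
    rcases (Equiv.swap_apply_ne_self_iff.mp hx).2 with rfl | rfl <;> assumption

def SymmInvariant {n : ℕ} (D : Finset (Cube n)) : Prop :=
  ∀ σ : Equiv.Perm (Fin n), ∀ c ∈ D, MemUpTo D (permCube σ c)

theorem Sat.const_iff {n : ℕ} {b : Bool} {c : Cube n} :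
    Sat (fun _ => b) c ↔ ∀ i ∈ c.1, c.2 i = b :=
  forall₂_congr fun _ _ => eq_comm

section Invariant

variable {n : ℕ} {D : Finset (Cube n)} (hD : DistinctDNF D) (hσ : SymmInvariant D)
include hD hσ

theorem DistinctDNF.apply_perm_eq {c d : Cube n} (hc : c ∈ D) (hd : d ∈ D)
    {σ : Equiv.Perm (Fin n)} (hcd : c.1.image σ = d.1) {i : Fin n} (hi : i ∈ c.1) :
    d.2 (σ i) = c.2 i := by
  obtain ⟨c', hc', hsupp, hsign⟩ := hσ σ c hc
  obtain rfl : c' = d := hD c' hc' d hd (hsupp.trans hcd)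
  simpa [permCube] using hsign (σ i) (Finset.mem_image_of_mem σ hi)

theorem DistinctDNF.sat_const_of_mem {c : Cube n} (hc : c ∈ D) {i : Fin n} (hi : i ∈ c.1) :
    Sat (fun _ => c.2 i) c := by
  refine Sat.const_iff.mpr fun j hj => ?_
  simpa using (hD.apply_perm_eq hσ hc hc (Finset.image_swap_of_mem hj hi) hj).symm

theorem DistinctDNF.card_ne_of_sat_const {c d : Cube n} (hc : c ∈ D) (hd : d ∈ D)
    (hne : c.1.Nonempty) {b : Bool} (hcb : Sat (fun _ => b) c) (hdb : Sat (fun _ => !b) d) :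
    c.1.card ≠ d.1.card := by
  intro hcard
  obtain ⟨i, hi⟩ := hne
  obtain ⟨σ, hcd⟩ := Finset.exists_perm_image_eq hcard
  have hσi : σ i ∈ d.1 := hcd ▸ Finset.mem_image_of_mem σ hi
  have := hD.apply_perm_eq hσ hc hd hcd hi
  rw [Sat.const_iff.mp hdb _ hσi, Sat.const_iff.mp hcb _ hi] at this
  simp at this

end Invariant

open Finset in
/-- An assignment with one true value fewer than the shortest positive cube `c` must be covered
by a negative cube, which then fits among its `n - |c| + 1` false variables. -/
theorem DistinctDNF.exists_card_ne_of_tauto {n : ℕ} {D : Finset (Cube n)} (hD : DistinctDNF D)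
    (hσ : SymmInvariant D) (ht : Tauto D) (hne : ∀ c ∈ D, c.1.Nonempty) :
    ∃ c ∈ D, ∃ d ∈ D, c.1.card ≠ d.1.card ∧ c.1.card + d.1.card ≤ n + 1 := by
  classical
  obtain ⟨c₀, hc₀, hsat₀⟩ := ht fun _ => true
  obtain ⟨c, hcP, hmin⟩ := (D.filter (Sat fun _ => true)).exists_min_image (·.1.card)
    ⟨c₀, mem_filter.mpr ⟨hc₀, hsat₀⟩⟩
  obtain ⟨hc, hcpos⟩ := mem_filter.mp hcP
  have hcn : c.1.card ≤ n := by simpa using card_le_univ c.1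
  obtain ⟨T, -, hT⟩ := (univ : Finset (Fin n)).exists_subset_card_eq (n := c.1.card - 1)
    (by simp only [card_univ, Fintype.card_fin]; omega)
  obtain ⟨d, hd, hsat⟩ := ht fun i => decide (i ∈ T)
  obtain ⟨i, hi⟩ := hne d hd
  have hdsign := hD.sat_const_of_mem hσ hd hi
  have hsupp : d.1 ⊆ univ.filter fun j => decide (j ∈ T) = d.2 i := fun j hj =>
    mem_filter.mpr ⟨mem_univ _, (hsat j hj).trans (Sat.const_iff.mp hdsign j hj)⟩
  have hcard := card_le_card hsupp
  cases hb : d.2 i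
  · rw [hb] at hdsign hcard
    refine ⟨c, hc, d, hd, hD.card_ne_of_sat_const hσ hc hd (hne c hc) hcpos hdsign, ?_⟩
    simp only [decide_eq_false_iff_not, filter_not, filter_mem_eq_inter, univ_inter,
      card_sdiff_of_subset (subset_univ T), card_univ, Fintype.card_fin, hT] at hcard
    omega
  · rw [hb] at hdsign hcard
    have := hmin d (mem_filter.mpr ⟨hd, hdsign⟩)
    simp only [decide_eq_true_eq, filter_mem_eq_inter, univ_inter, hT] at hcard
    have := (hne c hc).card_pos
    omega

def constCubes (n : ℕ) (b : Bool) (p : ℕ) : Finset (Cube n) :=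
  (Finset.univ.powersetCard p).image fun S => (S, fun _ => b)

theorem mem_constCubes {n p : ℕ} {b : Bool} {c : Cube n} :
    c ∈ constCubes n b p ↔ c.1.card = p ∧ c.2 = fun _ => b := by
  constructor
  · intro h
    obtain ⟨S, hS, rfl⟩ := Finset.mem_image.mp h
    exact ⟨Finset.mem_powersetCard_univ.mp hS, rfl⟩
  · rintro ⟨hp, hb⟩
    exact Finset.mem_image.mpr ⟨c.1, Finset.mem_powersetCard_univ.mpr hp, Prod.ext rfl hb.symm⟩

theorem permCube_mem_constCubes {n p : ℕ} {b : Bool} {c : Cube n} (σ : Equiv.Perm (Fin n))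
    (hc : c ∈ constCubes n b p) : permCube σ c ∈ constCubes n b p := by
  obtain ⟨hp, hb⟩ := mem_constCubes.mp hc
  exact mem_constCubes.mpr ⟨by simp [permCube, Finset.card_image_of_injective _ σ.injective, hp],
    by simp only [permCube, hb]; rfl⟩

theorem exists_sat_mem_constCubes {n p : ℕ} {b : Bool} (a : Fin n → Bool)
    (h : p ≤ (Finset.univ.filter fun i => a i = b).card) : ∃ c ∈ constCubes n b p, Sat a c := by
  obtain ⟨S, hS, hp⟩ := Finset.exists_subset_card_eq h
  exact ⟨(S, fun _ => b), mem_constCubes.mpr ⟨hp, rfl⟩,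
    fun i hi => (Finset.mem_filter.mp (hS hi)).2⟩

def thresholdDNF (n p q : ℕ) : Finset (Cube n) :=
  constCubes n true p ∪ constCubes n false q

section Threshold

variable {n p q : ℕ}

theorem mem_thresholdDNF {c : Cube n} :
    c ∈ thresholdDNF n p q ↔ c ∈ constCubes n true p ∨ c ∈ constCubes n false q :=
  Finset.mem_union

theorem distinctDNF_thresholdDNF (hpq : p ≠ q) : DistinctDNF (thresholdDNF n p q) := by
  intro c hc c' hc' hsupp
  simp only [mem_thresholdDNF, mem_constCubes] at hc hc'
  rcases hc with ⟨hp, hb⟩ | ⟨hq, hb⟩ <;> rcases hc' with ⟨hp', hb'⟩ | ⟨hq', hb'⟩ <;>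
    first
    | exact Prod.ext hsupp (hb.trans hb'.symm)
    | (rw [hsupp] at *; omega)

theorem symmInvariant_thresholdDNF : SymmInvariant (thresholdDNF n p q) := by
  intro σ c hc
  refine ⟨permCube σ c, ?_, rfl, fun _ _ => rfl⟩
  rw [mem_thresholdDNF] at hc ⊢
  exact hc.imp (permCube_mem_constCubes σ) (permCube_mem_constCubes σ)

theorem tauto_thresholdDNF (hpq : p + q ≤ n + 1) : Tauto (thresholdDNF n p q) := by
  intro a
  have hsplit : (Finset.univ.filter fun i => a i = true).card +
      (Finset.univ.filter fun i => a i = false).card = n := by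
    simpa using Finset.card_filter_add_card_filter_not (s := Finset.univ) (fun i => a i = true)
  by_cases hp : p ≤ (Finset.univ.filter fun i => a i = true).card
  · obtain ⟨c, hc, hsat⟩ := exists_sat_mem_constCubes a hp
    exact ⟨c, Finset.mem_union_left _ hc, hsat⟩
  · obtain ⟨c, hc, hsat⟩ := exists_sat_mem_constCubes (p := q) (b := false) a (by omega)
    exact ⟨c, Finset.mem_union_right _ hc, hsat⟩

theorem card_of_mem_thresholdDNF {c : Cube n} (hc : c ∈ thresholdDNF n p q) :
    c.1.card = p ∨ c.1.card = q := by
  simp only [mem_thresholdDNF, mem_constCubes] at hc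
  exact hc.imp And.left And.left

end Threshold

theorem stmt16_general (n u k : ℕ) (hk1 : 1 ≤ k) :
    (∃ D : Finset (Cube n), DistinctDNF D ∧ Tauto D ∧
      (∀ σ : Equiv.Perm (Fin n), ∀ c ∈ D, MemUpTo D (permCube σ c)) ∧
      ∀ c ∈ D, k ≤ c.1.card ∧ c.1.card ≤ u)
    ↔ k ≤ min (u - 1) (n / 2) := by
  constructor
  · rintro ⟨D, hD, ht, hσ, hsize⟩
    obtain ⟨c, hc, d, hd, hcd, hsum⟩ := hD.exists_card_ne_of_tauto hσ ht fun c hc =>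
      Finset.card_pos.mp (by have := hsize c hc; omega)
    have := hsize c hc
    have := hsize d hd
    rw [le_min_iff]
    omega
  · intro hk
    rw [le_min_iff] at hk
    refine ⟨thresholdDNF n k (k + 1), distinctDNF_thresholdDNF (by omega),
      tauto_thresholdDNF (by omega), symmInvariant_thresholdDNF, fun c hc => ?_⟩
    rcases card_of_mem_thresholdDNF hc with h | h <;> omega

theorem stmt16 (n u k : ℕ) (hn : 2 ≤ n) (hu2 : 2 ≤ u) (hun : u ≤ n) (hk1 : 1 ≤ k) :
    (∃ D : Finset (Cube n), DistinctDNF D ∧ Tauto D ∧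
      (∀ σ : Equiv.Perm (Fin n), ∀ c ∈ D, MemUpTo D (permCube σ c)) ∧
      ∀ c ∈ D, k ≤ c.1.card ∧ c.1.card ≤ u)
    ↔ k ≤ min (u - 1) (n / 2) :=
  stmt16_general n u k hk1
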